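/- arXiv:1208.5623 — 3 statements merged into one kernel-verified Lean document; each statement's English description precedes it below -/
import Mathlib

section
/- Let $G$ be a group and $x, y \in G$ with $[x, y, y, \ldots, y] = 1$ where $y^m$ appears $n$ times, i.e., $[x,_n y^m] = 1$ for some positive integers $n, m$. Then the subgroup $\langle x \rangle^{\langle y \rangle}$ (the smallest subgroup containing $x$ and normalized by $y$) is finitely generated. -/
/-- The commutator `[a,b] = a⁻¹ b⁻¹ a b`. -/
def pcomm {G : Type*} [Group G] (a b : G) : G := a⁻¹ * b⁻¹ * a * b

/-- The iterated Engel commutator `[g,ₙ a]`. -/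
def pengel {G : Type*} [Group G] (g a : G) : ℕ → G
  | 0 => g
  | n + 1 => pcomm (pengel g a n) a

/-- `a` is a left Engel element. -/
def IsLeftEngel {G : Type*} [Group G] (a : G) : Prop :=
  ∀ g : G, ∃ n : ℕ, 1 ≤ n ∧ pengel g a n = 1


/-!
Put `z = y ^ m`. If `[x,ₙ z] = 1`, every conjugate `x ^ (z ^ k)`, `k ∈ ℤ`, lies in the subgroup
generated by `x, x ^ z, …, x ^ (z ^ (n - 1))`: by induction on `n`, applied to `[x, z] = x⁻¹ x ^ z`,
all conjugates of `[x, z]` by powers of `z` lie there, and `x ^ (z ^ (k + 1))` is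
`x ^ (z ^ k) · [x, z] ^ (z ^ k)`. Conjugation by `y ^ r` fixes `z`, so each `x ^ (y ^ r)` satisfies
the same Engel condition. Writing `i = r + m q` with `0 ≤ r < m`, the group `⟨x⟩^⟨y⟩` is therefore
generated by the `x ^ (y ^ j)` with `0 ≤ j < n m`.
-/

lemma Int.exists_eq_natCast_add_mul (i : ℤ) {m : ℕ} (hm : 0 < m) :
    ∃ r : ℕ, r < m ∧ ∃ q : ℤ, i = r + m * q := by
  have hr₀ := Int.emod_nonneg i (b := m) (by omega)
  have hrm := Int.emod_lt_of_pos i (b := m) (by omega)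
  refine ⟨(i % m).toNat, by omega, i / m, ?_⟩
  rw [Int.toNat_of_nonneg hr₀, add_comm, Int.mul_ediv_add_emod]

section Engel

variable {G : Type*} [Group G]

lemma pengel_succ' (g a : G) (n : ℕ) : pengel g a (n + 1) = pengel (pcomm g a) a n := by
  induction n with
  | zero => rfl
  | succ k ih => rw [pengel, ih, pengel]

lemma map_pengel {H F : Type*} [Group H] [FunLike F G H] [MonoidHomClass F G H] (f : F)
    (g a : G) (n : ℕ) : f (pengel g a n) = pengel (f g) (f a) n := by
  induction n with
  | zero => rfl
  | succ k ih => simp only [pengel, pcomm, ih, map_mul, map_inv]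

lemma zpow_conj_zpow_conj (x g : G) (a b : ℤ) :
    (g ^ b)⁻¹ * ((g ^ a)⁻¹ * x * g ^ a) * g ^ b = (g ^ (a + b))⁻¹ * x * g ^ (a + b) := by
  rw [zpow_add]
  group

lemma zpow_add_one_conj (x z : G) (k : ℤ) :
    (z ^ (k + 1))⁻¹ * x * z ^ (k + 1) =
      (z ^ k)⁻¹ * x * z ^ k * ((z ^ k)⁻¹ * pcomm x z * z ^ k) := by
  rw [zpow_add_one, pcomm]
  group

theorem zpow_conj_mem_of_pengel_eq_one {H : Subgroup G} {x z : G} {n : ℕ}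
    (h : pengel x z n = 1) (hx : ∀ i < n, (z ^ (i : ℤ))⁻¹ * x * z ^ (i : ℤ) ∈ H) :
    ∀ k : ℤ, (z ^ k)⁻¹ * x * z ^ k ∈ H := by
  induction n generalizing x with
  | zero =>
    rw [show x = 1 from h]
    simp
  | succ n ih =>
    have hcomm : ∀ k : ℤ, (z ^ k)⁻¹ * pcomm x z * z ^ k ∈ H := by
      refine ih (by rwa [← pengel_succ']) fun i hi => ?_
      have hsucc := hx (i + 1) (by omega)
      rw [Nat.cast_succ, zpow_add_one_conj] at hsucc
      exact (H.mul_mem_cancel_left (hx i (by omega))).mp hsucc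
    have hstep (k : ℤ) :
        (z ^ (k + 1))⁻¹ * x * z ^ (k + 1) ∈ H ↔ (z ^ k)⁻¹ * x * z ^ k ∈ H := by
      rw [zpow_add_one_conj]
      exact H.mul_mem_cancel_right (hcomm k)
    intro k
    induction k with
    | zero => simpa using hx 0 (by omega)
    | succ k ihk => exact (hstep k).mpr ihk
    | pred k ihk => exact (hstep _).mp (by rwa [sub_add_cancel])

lemma pengel_conj_of_commute {g x z : G} (hgz : Commute g z) (n : ℕ) :
    pengel (g⁻¹ * x * g) z n = g⁻¹ * pengel x z n * g := by
  have hz : MulAut.conj g⁻¹ z = z := by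
    rw [MulAut.conj_apply, inv_inv, hgz.inv_left.eq, inv_mul_cancel_right]
  simpa only [MulAut.conj_apply, inv_inv, hz] using (map_pengel (MulAut.conj g⁻¹) x z n).symm

lemma zpow_conj_mem_closure_of_pengel_pow_eq_one {x y : G} {n m : ℕ} (hm : 0 < m)
    (h : pengel x (y ^ m) n = 1) (i : ℤ) :
    (y ^ i)⁻¹ * x * y ^ i ∈
      Subgroup.closure ((fun j : ℕ => (y ^ (j : ℤ))⁻¹ * x * y ^ (j : ℤ)) '' Set.Iio (n * m)) := by
  obtain ⟨r, hrm, q, rfl⟩ := Int.exists_eq_natCast_add_mul i hm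
  have hengel : pengel ((y ^ (r : ℤ))⁻¹ * x * y ^ (r : ℤ)) (y ^ m) n = 1 := by
    rw [pengel_conj_of_commute (((Commute.refl y).zpow_left _).pow_right _), h, mul_one,
      inv_mul_cancel]
  rw [← zpow_conj_zpow_conj, zpow_mul, zpow_natCast y m]
  refine zpow_conj_mem_of_pengel_eq_one hengel (fun j hj => Subgroup.subset_closure ?_) q
  refine ⟨r + m * j, by simp only [Set.mem_Iio]; nlinarith, ?_⟩
  rw [← zpow_natCast y m, ← zpow_mul, zpow_conj_zpow_conj]
  push_cast
  rfl

end Engel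

theorem stmt_0_general {G : Type*} [Group G] (x y : G) (n m : ℕ) (hm : 1 ≤ m)
    (h : pengel x (y ^ m) n = 1) :
    (Subgroup.closure {z : G | ∃ i : ℤ, z = (y ^ i)⁻¹ * x * y ^ i}).FG := by
  refine (Subgroup.fg_iff _).mpr
    ⟨(fun j : ℕ => (y ^ (j : ℤ))⁻¹ * x * y ^ (j : ℤ)) '' Set.Iio (n * m), le_antisymm ?_ ?_,
      (Set.finite_Iio _).image _⟩
  · exact Subgroup.closure_mono fun _ ⟨j, _, hj⟩ => ⟨j, hj.symm⟩
  · rw [Subgroup.closure_le]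
    rintro _ ⟨i, rfl⟩
    exact zpow_conj_mem_closure_of_pengel_pow_eq_one hm h i

theorem stmt_0 {G : Type*} [Group G] (x y : G) (n m : ℕ) (hn : 1 ≤ n) (hm : 1 ≤ m)
    (h : pengel x (y ^ m) n = 1) :
    (Subgroup.closure {z : G | ∃ i : ℤ, z = (y ^ i)⁻¹ * x * y ^ i}).FG :=
  stmt_0_general x y n m hm h
end

section
/- If $G$ is a group generated by two elements $x$ and $y$, then the commutator subgroup $G'$ equals the subgroup generated by all elements $([x,y])^{x^r y^s}$ for $r, s \in \mathbb{Z}$. -/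
/-!
Let `H` be the subgroup generated by the conjugates `[x,y]^(x^r y^s)`. Clearly `H ≤ G'`.
Conjugation by `y^(±1)` permutes the generators of `H`. For `x`, the identity
`x^r y^s x^e = x^(r+e) y^s [y^s, x^e]` shows that `[x,y]^(x^r y^s x^e)` is the conjugate of a
generator by `[y^s, x^e]`, and `[y^s, x^e] ∈ H` follows from `[y, x^e] ∈ H` because `y`
normalizes `H`; for `e = ±1` the latter is a generator or its inverse. So `H` is normalized by
`x` and `y`, hence normal, and `G ⧸ H` is generated by two commuting elements, so `G' ≤ H`.
-/

open Subgroup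
open scoped commutatorElement

section

variable {G : Type*} [Group G]

theorem pcomm_eq_commutatorElement (a b : G) : pcomm a b = ⁅a⁻¹, b⁻¹⁆ := by
  rw [pcomm, commutatorElement_def, inv_inv, inv_inv]

theorem map_pcomm {H : Type*} [Group H] (f : G →* H) (a b : G) :
    f (pcomm a b) = pcomm (f a) (f b) := by
  simp only [pcomm, map_mul, map_inv]

theorem pcomm_eq_one_iff {a b : G} : pcomm a b = 1 ↔ Commute a b := by
  rw [pcomm_eq_commutatorElement, commutatorElement_eq_one_iff_commute, Commute.inv_inv_iff]

theorem pcomm_mul_left (a b c : G) : pcomm (a * b) c = b⁻¹ * pcomm a c * b * pcomm b c := by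
  simp only [pcomm]; group

theorem pcomm_inv_left (a c : G) : pcomm a⁻¹ c = a * (pcomm a c)⁻¹ * a⁻¹ := by
  simp only [pcomm]; group

theorem isMulCommutative_of_closure_eq_top {s : Set G} (hs : closure s = ⊤)
    (hcomm : ∀ a ∈ s, ∀ b ∈ s, a * b = b * a) : IsMulCommutative G := by
  rw [← center_eq_top_iff, eq_top_iff, ← centralizer_univ, ← coe_top, ← hs, centralizer_closure,
    closure_le]
  exact fun a ha => mem_centralizer_iff.2 fun b hb => hcomm b hb a ha

theorem Subgroup.commutator_le_of_pcomm_mem {x y : G} (hgen : closure {x, y} = ⊤)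
    {N : Subgroup G} [N.Normal] (hxy : pcomm x y ∈ N) : _root_.commutator G ≤ N := by
  rw [← Normal.quotient_commutative_iff_commutator_le]
  have hcomm : Commute (QuotientGroup.mk' N x) (QuotientGroup.mk' N y) := by
    rwa [← pcomm_eq_one_iff, ← map_pcomm, QuotientGroup.mk'_apply, QuotientGroup.eq_one_iff]
  refine isMulCommutative_of_closure_eq_top (s := QuotientGroup.mk' N '' {x, y}) ?_ ?_
  · rw [← MonoidHom.map_closure, hgen, map_top_of_surjective _ (QuotientGroup.mk'_surjective N)]
  · rw [Set.image_pair]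
    rintro a (rfl | rfl) b (rfl | rfl)
    exacts [rfl, hcomm, hcomm.symm, rfl]

theorem Subgroup.conj_mem_of_mem_closure {s : Set G} {K : Subgroup G} {g : G}
    (hs : ∀ a ∈ s, g⁻¹ * a * g ∈ K) {h : G} (hh : h ∈ closure s) : g⁻¹ * h * g ∈ K := by
  have hle : closure s ≤ K.comap (MulAut.conj g⁻¹).toMonoidHom :=
    (closure_le _).2 fun a ha => by simpa using hs a ha
  simpa using hle hh

theorem Subgroup.mem_normalizer_of_conj_mem {H : Subgroup G} {g : G}
    (h₁ : ∀ n ∈ H, g⁻¹ * n * g ∈ H) (h₂ : ∀ n ∈ H, g * n * g⁻¹ ∈ H) :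
    g ∈ normalizer (H : Set G) :=
  mem_normalizer_iff.2 fun n => ⟨h₂ n, fun hn => by simpa [mul_assoc] using h₁ _ hn⟩

-- The elements normalizing `H` whose commutator with `b` lies in `H` form a subgroup.
theorem Subgroup.pcomm_zpow_mem {H : Subgroup G} {y b : G} (hy : y ∈ normalizer (H : Set G))
    (hb : pcomm y b ∈ H) (t : ℤ) : pcomm (y ^ t) b ∈ H := by
  let K : Subgroup G :=
    { carrier := {g | g ∈ normalizer (H : Set G) ∧ pcomm g b ∈ H}
      mul_mem' := fun {g k} ⟨hg, hgb⟩ ⟨hk, hkb⟩ => by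
        refine ⟨mul_mem hg hk, ?_⟩
        rw [pcomm_mul_left]
        exact mul_mem ((mem_normalizer_iff''.1 hk _).1 hgb) hkb
      one_mem' := ⟨one_mem _, by simp [pcomm]⟩
      inv_mem' := fun {g} ⟨hg, hgb⟩ => by
        refine ⟨inv_mem hg, ?_⟩
        rw [pcomm_inv_left]
        exact (mem_normalizer_iff.1 hg _).1 (inv_mem hgb) }
  exact (zpow_mem (show y ∈ K from ⟨hy, hb⟩) t).2

def pcommConjugates (x y : G) : Set G :=
  {z | ∃ r s : ℤ, z = (x ^ r * y ^ s)⁻¹ * pcomm x y * (x ^ r * y ^ s)}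

theorem pcomm_mem_pcommConjugates (x y : G) : pcomm x y ∈ pcommConjugates x y :=
  ⟨0, 0, by simp⟩

theorem pcommConjugates_subset_commutator (x y : G) :
    pcommConjugates x y ⊆ _root_.commutator G := by
  rintro _ ⟨r, s, rfl⟩
  have hxy : pcomm x y ∈ _root_.commutator G := by
    rw [pcomm_eq_commutatorElement]
    exact commutator_mem_commutator (mem_top _) (mem_top _)
  simpa using Normal.conj_mem inferInstance _ hxy (x ^ r * y ^ s)⁻¹

theorem zpow_conj_mem_pcommConjugates_right {x y z : G} (hz : z ∈ pcommConjugates x y)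
    (e : ℤ) : (y ^ e)⁻¹ * z * y ^ e ∈ pcommConjugates x y := by
  obtain ⟨r, s, rfl⟩ := hz
  exact ⟨r, s + e, by rw [zpow_add]; group⟩

theorem right_mem_normalizer_closure_pcommConjugates (x y : G) :
    y ∈ normalizer (closure (pcommConjugates x y) : Set G) := by
  have hconj (e : ℤ) {h : G} (hh : h ∈ closure (pcommConjugates x y)) :
      (y ^ e)⁻¹ * h * y ^ e ∈ closure (pcommConjugates x y) :=
    conj_mem_of_mem_closure
      (fun _ hz => subset_closure (zpow_conj_mem_pcommConjugates_right hz e)) hh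
  exact mem_normalizer_of_conj_mem (fun _ hn => by simpa using hconj 1 hn)
    (fun _ hn => by simpa using hconj (-1) hn)

theorem zpow_conj_mem_closure_pcommConjugates_left {x y : G} {e : ℤ}
    (he : pcomm y (x ^ e) ∈ closure (pcommConjugates x y)) {h : G}
    (hh : h ∈ closure (pcommConjugates x y)) :
    (x ^ e)⁻¹ * h * x ^ e ∈ closure (pcommConjugates x y) := by
  refine conj_mem_of_mem_closure (fun z hz => ?_) hh
  obtain ⟨r, s, rfl⟩ := hz
  have hw := pcomm_zpow_mem (right_mem_normalizer_closure_pcommConjugates x y) he s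
  have hz' : _ ∈ closure (pcommConjugates x y) := subset_closure ⟨r + e, s, rfl⟩
  have key : (x ^ e)⁻¹ * ((x ^ r * y ^ s)⁻¹ * pcomm x y * (x ^ r * y ^ s)) * x ^ e =
      (pcomm (y ^ s) (x ^ e))⁻¹ * ((x ^ (r + e) * y ^ s)⁻¹ * pcomm x y * (x ^ (r + e) * y ^ s)) *
        pcomm (y ^ s) (x ^ e) := by
    simp only [pcomm, zpow_add]; group
  rw [key]
  exact mul_mem (mul_mem (inv_mem hw) hz') hw

theorem left_mem_normalizer_closure_pcommConjugates (x y : G) :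
    x ∈ normalizer (closure (pcommConjugates x y) : Set G) := by
  have hpos : pcomm y (x ^ (1 : ℤ)) ∈ closure (pcommConjugates x y) := by
    have : pcomm y x = (pcomm x y)⁻¹ := by simp only [pcomm]; group
    rw [zpow_one, this]
    exact inv_mem (subset_closure (pcomm_mem_pcommConjugates x y))
  have hneg : pcomm y (x ^ (-1 : ℤ)) ∈ closure (pcommConjugates x y) :=
    subset_closure ⟨-1, 0, by simp only [pcomm]; group⟩
  exact mem_normalizer_of_conj_mem
    (fun _ hn => by simpa using zpow_conj_mem_closure_pcommConjugates_left hpos hn)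
    (fun _ hn => by simpa using zpow_conj_mem_closure_pcommConjugates_left hneg hn)

theorem closure_pcommConjugates_normal {x y : G} (hgen : closure {x, y} = ⊤) :
    (closure (pcommConjugates x y)).Normal := by
  rw [← normalizer_eq_top_iff, eq_top_iff, ← hgen, closure_le, Set.pair_subset_iff]
  exact ⟨left_mem_normalizer_closure_pcommConjugates x y,
    right_mem_normalizer_closure_pcommConjugates x y⟩

end

theorem stmt_2 {G : Type*} [Group G] (x y : G)
    (hgen : Subgroup.closure ({x, y} : Set G) = ⊤) :
    commutator G =
      Subgroup.closure {z : G | ∃ r s : ℤ,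
        z = (x ^ r * y ^ s)⁻¹ * pcomm x y * (x ^ r * y ^ s)} := by
  change _ = closure (pcommConjugates x y)
  have := closure_pcommConjugates_normal hgen
  exact le_antisymm
    (commutator_le_of_pcomm_mem hgen (subset_closure (pcomm_mem_pcommConjugates x y)))
    ((closure_le _).2 (pcommConjugates_subset_commutator x y))
end

section
/- Let $G$ be a group generated by a set of left Engel elements, let $x$ be a left Engel element of $G$, and let $H$ be a locally soluble normal subgroup of $G$. Then the subgroup $\langle H, x \rangle$ is locally soluble. -/
/-! Let `K ≤ H⟨x⟩` be finitely generated, with generators `hᵢ xᵗⁱ`, `hᵢ ∈ H`. As `x` is left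
Engel, the finitely many commutators `[hᵢ,ₖ x]` with `k` below the Engel degree of `hᵢ` generate
a subgroup `A ≤ H` containing the `hᵢ` with `x⁻¹ A x ≤ A`, because
`x⁻¹ [h,ₖ x] x = [h,ₖ x] [h,ₖ₊₁ x]`. Being finitely generated, `A` is soluble. The conjugates
`xʲ A x⁻ʲ` form an ascending chain of subgroups of the same derived length, so their union `P`
is soluble and normalised by `x`; then `P⟨x⟩` is soluble, `P` being normal in it with cyclic
quotient, and it contains `K`. -/

open scoped Pointwise

namespace Subgroup

variable {G G' : Type*} [Group G] [Group G']

/-- The derived series of `K` with its terms taken in `G`, rather than in `↥K` as for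
`derivedSeries K`; this makes it comparable across different subgroups. -/
def derivedSeriesIn (K : Subgroup G) (n : ℕ) : Subgroup G :=
  (fun L : Subgroup G => ⁅L, L⁆)^[n] K

theorem derivedSeriesIn_succ (K : Subgroup G) (n : ℕ) :
    K.derivedSeriesIn (n + 1) = ⁅K.derivedSeriesIn n, K.derivedSeriesIn n⁆ :=
  Function.iterate_succ_apply' _ _ _

theorem derivedSeriesIn_mono {K L : Subgroup G} (h : K ≤ L) (n : ℕ) :
    K.derivedSeriesIn n ≤ L.derivedSeriesIn n :=
  Monotone.iterate (fun _ _ h => commutator_mono h h) n h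

theorem map_derivedSeriesIn (f : G →* G') (K : Subgroup G) (n : ℕ) :
    (K.derivedSeriesIn n).map f = (K.map f).derivedSeriesIn n := by
  induction n with
  | zero => rfl
  | succ n ih => rw [derivedSeriesIn_succ, derivedSeriesIn_succ, map_commutator, ih]

theorem map_subtype_derivedSeries (K : Subgroup G) (n : ℕ) :
    (derivedSeries K n).map K.subtype = K.derivedSeriesIn n := by
  induction n with
  | zero => rw [derivedSeries_zero, ← MonoidHom.range_eq_map, range_subtype]; rfl
  | succ n ih => rw [derivedSeries_succ, map_commutator, ih, derivedSeriesIn_succ]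

theorem isSolvable_iff_exists_derivedSeriesIn_eq_bot (K : Subgroup G) :
    Group.IsSolvable K ↔ ∃ n, K.derivedSeriesIn n = ⊥ := by
  simp_rw [Group.isSolvable_def, ← map_subtype_derivedSeries,
    map_eq_bot_iff_of_injective _ K.subtype_injective]

theorem derivedSeriesIn_iSup_le {ι : Sort*} [Nonempty ι] {A : ι → Subgroup G}
    (hA : Directed (· ≤ ·) A) (n : ℕ) :
    (⨆ i, A i).derivedSeriesIn n ≤ ⨆ i, (A i).derivedSeriesIn n := by
  induction n with
  | zero => rfl
  | succ n ih =>
    have hdir : Directed (· ≤ ·) fun i => (A i).derivedSeriesIn n :=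
      hA.mono_comp (· ≤ ·) fun _ _ h => derivedSeriesIn_mono h n
    rw [derivedSeriesIn_succ, commutator_le]
    intro g₁ hg₁ g₂ hg₂
    obtain ⟨i, hi⟩ := (mem_iSup_of_directed hdir).1 (ih hg₁)
    obtain ⟨j, hj⟩ := (mem_iSup_of_directed hdir).1 (ih hg₂)
    obtain ⟨k, hik, hjk⟩ := hA i j
    refine mem_iSup_of_mem k ?_
    rw [derivedSeriesIn_succ]
    exact commutator_mem_commutator (derivedSeriesIn_mono hik n hi)
      (derivedSeriesIn_mono hjk n hj)

theorem isSolvable_iSup_of_directed {ι : Sort*} [Nonempty ι] {A : ι → Subgroup G}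
    (hA : Directed (· ≤ ·) A) {n : ℕ} (hn : ∀ i, (A i).derivedSeriesIn n = ⊥) :
    Group.IsSolvable ↥(⨆ i, A i) :=
  (isSolvable_iff_exists_derivedSeriesIn_eq_bot _).2
    ⟨n, le_bot_iff.1 ((derivedSeriesIn_iSup_le hA n).trans (iSup_le fun i => (hn i).le))⟩

theorem isSolvable_of_le {K L : Subgroup G} (h : K ≤ L) [Group.IsSolvable L] :
    Group.IsSolvable K :=
  Group.isSolvable_of_isSolvable_injective (inclusion_injective h)

theorem isSolvable_sup_of_le_normalizer {H N : Subgroup G} (hLE : H ≤ normalizer N)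
    [Group.IsSolvable H] [Group.IsSolvable N] : Group.IsSolvable ↥(H ⊔ N) := by
  have := normal_subgroupOf_sup_of_le_normalizer hLE
  rw [Group.isSolvable_iff_subgroup_quotient (N.subgroupOf (H ⊔ N))]
  have hN : N ≤ H ⊔ N := le_sup_right
  refine ⟨Group.isSolvable_of_isSolvable_injective (f := (subgroupOfEquivOfLe hN).toMonoidHom)
    (subgroupOfEquivOfLe hN).injective, ?_⟩
  refine Group.isSolvable_of_surjective
    (f := (QuotientGroup.mk' (N.subgroupOf (H ⊔ N))).comp (inclusion le_sup_left)) ?_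
  rintro ⟨m⟩
  obtain ⟨h, hh, n, hn, hm⟩ : (m : G) ∈ (H : Set G) * N := by
    rw [← coe_mul_of_left_le_normalizer_right H N hLE]; exact m.2
  refine ⟨⟨h, hh⟩, QuotientGroup.eq.2 ?_⟩
  rw [mem_subgroupOf]
  simpa [← hm] using hn

theorem exists_fg_le_and_le_sup_of_fg {N M K : Subgroup G} [N.Normal] (hK : K.FG)
    (hKNM : K ≤ N ⊔ M) : ∃ L ≤ N, L.FG ∧ K ≤ L ⊔ M := by
  obtain ⟨T, rfl, hT⟩ := (fg_iff K).1 hK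
  have hdec (s : G) (hs : s ∈ T) : ∃ n ∈ N, ∃ m ∈ M, n * m = s := by
    have hs' := hKNM (subset_closure hs)
    rwa [← SetLike.mem_coe, normal_mul, Set.mem_mul] at hs'
  choose n hnN m hmM hnm using hdec
  have : Finite T := hT.to_subtype
  refine ⟨closure (Set.range fun s : T => n s s.2),
    (closure_le _).2 (Set.range_subset_iff.2 fun s => hnN _ _),
    (fg_iff _).2 ⟨_, rfl, Set.finite_range _⟩, (closure_le _).2 fun s hs => ?_⟩
  rw [← hnm s hs]
  exact mul_mem (mem_sup_left (subset_closure ⟨⟨s, hs⟩, rfl⟩)) (mem_sup_right (hmM s hs))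

theorem isSolvable_sup_zpowers_of_le_map_conj {A : Subgroup G} [Group.IsSolvable A] {x : G}
    (hA : A ≤ A.map (MulAut.conj x).toMonoidHom) : Group.IsSolvable ↥(A ⊔ zpowers x) := by
  set C : ℕ → Subgroup G := fun j => A.map (MulAut.conj (x ^ j)).toMonoidHom
  have hC_succ (j : ℕ) : (C j).map (MulAut.conj x).toMonoidHom = C (j + 1) := by
    simp only [C, map_map, pow_succ', map_mul]; rfl
  have hC : Monotone C := monotone_nat_of_le_succ fun j =>
    calc C j ≤ (A.map (MulAut.conj x).toMonoidHom).map (MulAut.conj (x ^ j)).toMonoidHom :=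
          map_mono hA
      _ = C (j + 1) := by simp only [C, map_map, pow_succ, map_mul]; rfl
  set P := ⨆ j, C j
  obtain ⟨n, hn⟩ := (isSolvable_iff_exists_derivedSeriesIn_eq_bot A).1 ‹_›
  have : Group.IsSolvable P := isSolvable_iSup_of_directed hC.directed_le fun j => by
    rw [← map_derivedSeriesIn, hn, map_bot]
  have hxP : x ∈ normalizer P := by
    rw [mem_normalizer_iff_map_conj_eq]
    exact (map_iSup _ C).trans ((iSup_congr hC_succ).trans (hC.iSup_nat_add 1))
  have hAP : A ≤ P := le_iSup_of_le 0 fun a ha => ⟨a, ha, by simp⟩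
  have : Group.IsSolvable (zpowers x) := Group.isSolvable_of_comm mul_comm'
  have := isSolvable_sup_of_le_normalizer (zpowers_le.2 hxP)
  rw [sup_comm]
  exact isSolvable_of_le (sup_le_sup_left hAP _)

end Subgroup

section Engel

variable {G : Type*} [Group G]

theorem conj_pengel (g x : G) (k : ℕ) :
    x⁻¹ * pengel g x k * x = pengel g x k * pengel g x (k + 1) := by
  simp only [pengel, pcomm]
  group

theorem pengel_mem {H : Subgroup G} [H.Normal] {g : G} (hg : g ∈ H) (x : G) (k : ℕ) :
    pengel g x k ∈ H := by
  induction k with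
  | zero => exact hg
  | succ k ih =>
    have hconj := Subgroup.Normal.conj_mem' ‹_› _ ih x
    rw [conj_pengel] at hconj
    exact (mul_mem_cancel_left ih).1 hconj

theorem exists_fg_le_map_conj_of_isLeftEngel {H L : Subgroup G} [H.Normal] {x : G}
    (hx : IsLeftEngel x) (hLH : L ≤ H) (hL : L.FG) :
    ∃ A : Subgroup G, L ≤ A ∧ A ≤ H ∧ A.FG ∧ A ≤ A.map (MulAut.conj x).toMonoidHom := by
  obtain ⟨T, rfl, hT⟩ := (Subgroup.fg_iff L).1 hL
  choose n hn_pos hn using hx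
  set B := ⋃ g ∈ T, pengel g x '' Set.Iio (n g)
  have mem_B {g : G} (hg : g ∈ T) {k : ℕ} (hk : k < n g) : pengel g x k ∈ B :=
    Set.mem_biUnion hg ⟨k, hk, rfl⟩
  refine ⟨Subgroup.closure B, Subgroup.closure_mono fun g hg => mem_B hg (hn_pos g),
    (Subgroup.closure_le _).2 ?_,
    (Subgroup.fg_iff _).2 ⟨B, rfl, hT.biUnion fun g _ => (Set.finite_Iio _).image _⟩, ?_⟩
  · simp only [B, Set.iUnion_subset_iff, Set.image_subset_iff]
    exact fun g hg k _ => pengel_mem (hLH (Subgroup.subset_closure hg)) x k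
  · refine (Subgroup.closure_le _).2 fun b hb => Subgroup.mem_map_equiv.2 ?_
    obtain ⟨g, hg, k, hk, rfl⟩ : ∃ g ∈ T, ∃ k < n g, pengel g x k = b := by
      simpa only [B, Set.mem_iUnion, Set.mem_image, Set.mem_Iio, exists_prop] using hb
    simp only [MulAut.conj_symm_apply, conj_pengel]
    refine mul_mem (Subgroup.subset_closure hb) ?_
    rcases (show k + 1 ≤ n g from hk).lt_or_eq with hlt | heq
    · exact Subgroup.subset_closure (mem_B hg hlt)
    · rw [heq, hn]
      exact one_mem _

end Engel

theorem stmt_6_general {G : Type*} [Group G] (x : G) (hx : IsLeftEngel x)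
    (H : Subgroup G) (hHnormal : H.Normal)
    (hHls : ∀ K : Subgroup G, K ≤ H → K.FG → IsSolvable K) :
    ∀ K : Subgroup G, K ≤ H ⊔ Subgroup.closure {x} → K.FG → IsSolvable K := by
  intro K hK hKfg
  rw [← Subgroup.zpowers_eq_closure] at hK
  obtain ⟨L, hLH, hLfg, hKL⟩ := Subgroup.exists_fg_le_and_le_sup_of_fg hKfg hK
  obtain ⟨A, hLA, hAH, hAfg, hAx⟩ := exists_fg_le_map_conj_of_isLeftEngel hx hLH hLfg
  have : Group.IsSolvable A := hHls A hAH hAfg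
  have := Subgroup.isSolvable_sup_zpowers_of_le_map_conj hAx
  exact Subgroup.isSolvable_of_le (hKL.trans (sup_le_sup_right hLA _))

theorem stmt_6 {G : Type*} [Group G] (S : Set G) (hS : ∀ a ∈ S, IsLeftEngel a)
    (hgen : Subgroup.closure S = ⊤) (x : G) (hx : IsLeftEngel x)
    (H : Subgroup G) (hHnormal : H.Normal)
    (hHls : ∀ K : Subgroup G, K ≤ H → K.FG → IsSolvable K) :
    ∀ K : Subgroup G, K ≤ H ⊔ Subgroup.closure {x} → K.FG → IsSolvable K :=
  stmt_6_general x hx H hHnormal hHls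
end
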